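/- arXiv:1710.08982 — 2 statements merged into one kernel-verified Lean document; each statement's English description precedes it below -/
import Mathlib

section
/- Let G be a loopless multigraph on a finite vertex set, let t ≥ 0 be an integer, and let H be the t-core of G. If corefan(H) ≤ t, then Fan(G) ≤ Δ(G) + t. -/
structure Multigraph (V : Type*) where
  mu : V → V → ℕ
  symm : ∀ u v, mu u v = mu v u
  loopless : ∀ v, mu v v = 0

namespace Multigraph

variable {V : Type*} [Fintype V]

/-- The degree of a vertex: number of incident edges. -/
def deg (G : Multigraph V) (v : V) : ℕ := ∑ u, G.mu v u

/-- The maximum degree Δ(G). -/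
def maxDeg (G : Multigraph V) : ℕ := Finset.univ.sup (deg G)

/-- The local multiplicity μ_G(v). -/
def locMult (G : Multigraph V) (v : V) : ℕ := Finset.univ.sup (G.mu v)

end Multigraph

namespace Multigraph

variable {V : Type*} [Fintype V]

/-- The t-core of G : induced submultigraph on the vertices v with
d_G(v) + μ_G(v) > Δ(G) + t. -/
def tCore (G : Multigraph V) (t : ℕ) : Multigraph V where
  mu u v := if (maxDeg G + t < deg G u + locMult G u) ∧
               (maxDeg G + t < deg G v + locMult G v) then G.mu u v else 0
  symm u v := by
    by_cases h : (maxDeg G + t < deg G u + locMult G u) ∧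
        (maxDeg G + t < deg G v + locMult G v)
    · rw [if_pos h, if_pos ⟨h.2, h.1⟩, G.symm]
    · rw [if_neg h, if_neg fun h' => h ⟨h'.2, h'.1⟩]
  loopless v := by
    split <;> simp [G.loopless]

end Multigraph

namespace Multigraph

variable {V : Type*} [Fintype V]

/-- K is a subgraph of H (same vertex set, smaller multiplicities). -/
def IsSubgraph (K H : Multigraph V) : Prop := ∀ u v, K.mu u v ≤ H.mu u v

/-- K has at least one edge. -/
def HasEdge (K : Multigraph V) : Prop := ∃ u v, 1 ≤ K.mu u v

/-- The cfan degree cdeg_{H,K}(x,y): least l such that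
∑_{z∈Z}(d_K(z) − d_H(z) + μ_K(x,z) − l) ≤ 1 for every Z ⊆ N_K(x) with y ∈ Z. -/
noncomputable def cdeg (H K : Multigraph V) (x y : V) : ℕ :=
  sInf { l : ℕ | ∀ Z : Finset V, (∀ z ∈ Z, 1 ≤ K.mu x z) → y ∈ Z →
    ∑ z ∈ Z, ((K.deg z : ℤ) - (H.deg z : ℤ) + (K.mu x z : ℤ) - (l : ℤ)) ≤ 1 }

/-- The cfan number corefan(H): max over nonempty subgraphs K of H of the min of
cdeg_{H,K}(x,y) over edges xy of K (0 if H is edgeless). -/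
noncomputable def corefan (H : Multigraph V) : ℕ :=
  sSup { n | ∃ K : Multigraph V, IsSubgraph K H ∧ HasEdge K ∧
    n = sInf { m | ∃ x y, 1 ≤ K.mu x y ∧ m = cdeg H K x y } }

end Multigraph

namespace Multigraph

variable {V : Type*} [Fintype V]

/-- The fan degree deg_J(x,y): least k satisfying condition (i) or (ii). -/
noncomputable def fanDeg (J : Multigraph V) (x y : V) : ℕ :=
  sInf { k : ℕ | ((J.deg x : ℤ) + (J.deg y : ℤ) - (J.mu x y : ℤ) ≤ (k : ℤ)) ∨
    (∀ Z : Finset V, (∀ z ∈ Z, 1 ≤ J.mu x z) → y ∈ Z → 2 ≤ Z.card →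
      ∑ z ∈ Z, ((J.deg z : ℤ) + (J.mu x z : ℤ) - (k : ℤ)) ≤ 1) }

/-- The fan number fan(G): max over nonempty subgraphs J of G of the min of
deg_J(x,y) over edges xy of J (0 if G is edgeless). -/
noncomputable def fanNum (G : Multigraph V) : ℕ :=
  sSup { n | ∃ J : Multigraph V, IsSubgraph J G ∧ HasEdge J ∧
    n = sInf { m | ∃ x y, 1 ≤ J.mu x y ∧ m = fanDeg J x y } }

/-- Fan(G) = max(Δ(G), fan(G)). -/
noncomputable def bigFan (G : Multigraph V) : ℕ := max (maxDeg G) (fanNum G)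

end Multigraph


/-!
Take a nonempty subgraph `J ⊆ G` and let `K` be its restriction to the core vertices. A vertex
`z` outside the core has `d_J(z) + μ_J(x,z) ≤ d_G(z) + μ_G(z) ≤ Δ(G) + t`, so it contributes
nothing positive to the fan sums for `k = Δ(G) + t`. For a core vertex `z`, the edges of `J`
leaving the core are edges of `G` leaving the core, so `d_J(z) - d_G(z) ≤ d_K(z) - d_H(z)`, and
the fan sum over the core part of a fan at a core vertex is bounded by the cfan sum for `l = t`.
Hence if `K` has an edge, an edge of `K` of cfan degree at most `corefan(H) ≤ t` has fan degree
at most `Δ(G) + t` in `J`; if `K` is edgeless, some edge of `J` sits at a vertex all of whose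
neighbours lie outside the core, and its fan sums are nonpositive.
-/

namespace Multigraph

section induce

variable {V : Type*}

def induce (G : Multigraph V) (p : V → Prop) [DecidablePred p] : Multigraph V where
  mu u v := if p u ∧ p v then G.mu u v else 0
  symm u v := by
    by_cases h : p u ∧ p v
    · rw [if_pos h, if_pos h.symm, G.symm]
    · rw [if_neg h, if_neg fun h' => h h'.symm]
  loopless v := by
    split <;> simp [G.loopless]

variable (p : V → Prop) [DecidablePred p]

lemma induce_mu (G : Multigraph V) (u v : V) :
    (G.induce p).mu u v = if p u ∧ p v then G.mu u v else 0 := rfl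

variable {p}

lemma induce_mu_of {G : Multigraph V} {u v : V} (hu : p u) (hv : p v) :
    (G.induce p).mu u v = G.mu u v :=
  if_pos ⟨hu, hv⟩

lemma of_one_le_induce_mu {G : Multigraph V} {u v : V} (h : 1 ≤ (G.induce p).mu u v) :
    p u ∧ p v ∧ 1 ≤ G.mu u v := by
  rw [induce_mu] at h
  split at h
  · exact ⟨‹p u ∧ p v›.1, ‹p u ∧ p v›.2, h⟩
  · omega

lemma IsSubgraph.induce {J G : Multigraph V} (h : J.IsSubgraph G) :
    (J.induce p).IsSubgraph (G.induce p) := by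
  intro u v
  rw [induce_mu, induce_mu]
  split
  · exact h u v
  · exact le_rfl

end induce

variable {V : Type*} [Fintype V]

lemma mu_le_locMult (G : Multigraph V) (u v : V) : G.mu u v ≤ G.locMult u :=
  Finset.le_sup (Finset.mem_univ v)

lemma mu_le_deg (G : Multigraph V) (u v : V) : G.mu u v ≤ G.deg u :=
  Finset.single_le_sum (fun _ _ => Nat.zero_le _) (Finset.mem_univ v)

lemma deg_le_maxDeg (G : Multigraph V) (v : V) : G.deg v ≤ G.maxDeg :=
  Finset.le_sup (Finset.mem_univ v)

lemma IsSubgraph.deg_le {J G : Multigraph V} (h : J.IsSubgraph G) (v : V) :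
    J.deg v ≤ G.deg v :=
  Finset.sum_le_sum fun u _ => h v u

lemma IsSubgraph.mu_le_locMult {J G : Multigraph V} (h : J.IsSubgraph G) (x z : V) :
    J.mu x z ≤ G.locMult z :=
  calc J.mu x z ≤ G.mu x z := h x z
    _ = G.mu z x := G.symm x z
    _ ≤ G.locMult z := G.mu_le_locMult z x

lemma IsSubgraph.deg_add_mu_le {J G : Multigraph V} (h : J.IsSubgraph G) (x z : V) :
    J.deg z + J.mu x z ≤ G.deg z + G.locMult z :=
  Nat.add_le_add (h.deg_le z) (h.mu_le_locMult x z)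

lemma tCore_eq_induce (G : Multigraph V) (t : ℕ) :
    G.tCore t = G.induce fun v => G.maxDeg + t < G.deg v + G.locMult v := rfl

/-- Every edge of `J` at `z` that leaves `p` is an edge of `G` leaving `p`. -/
lemma IsSubgraph.deg_add_deg_induce_le {J G : Multigraph V} (h : J.IsSubgraph G)
    {p : V → Prop} [DecidablePred p] {z : V} (hz : p z) : J.deg z + (G.induce p).deg z ≤ G.deg z + (J.induce p).deg z := by
  simp only [deg, ← Finset.sum_add_distrib]
  refine Finset.sum_le_sum fun u _ => ?_
  by_cases hu : p u
  · rw [induce_mu_of hz hu, induce_mu_of hz hu, add_comm]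
  · rw [induce_mu, induce_mu, if_neg fun h' => hu h'.2, if_neg fun h' => hu h'.2]
    exact Nat.add_le_add_right (h z u) 0

lemma maxDeg_mem_cdeg_set {H K : Multigraph V} (hK : K.IsSubgraph H) (x y : V) :
    H.maxDeg ∈ { l : ℕ | ∀ Z : Finset V, (∀ z ∈ Z, 1 ≤ K.mu x z) → y ∈ Z →
      ∑ z ∈ Z, ((K.deg z : ℤ) - (H.deg z : ℤ) + (K.mu x z : ℤ) - (l : ℤ)) ≤ 1 } := by
  intro Z _ _
  refine (Finset.sum_nonpos fun z _ => ?_).trans zero_le_one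
  have hdeg := hK.deg_le z
  have hmu : K.mu x z ≤ H.maxDeg :=
    calc K.mu x z = K.mu z x := K.symm x z
      _ ≤ K.deg z := K.mu_le_deg z x
      _ ≤ H.deg z := hK.deg_le z
      _ ≤ H.maxDeg := H.deg_le_maxDeg z
  omega

lemma cdeg_le_maxDeg {H K : Multigraph V} (hK : K.IsSubgraph H) (x y : V) :
    cdeg H K x y ≤ H.maxDeg :=
  Nat.sInf_le (maxDeg_mem_cdeg_set hK x y)

lemma sum_le_of_cdeg_le {H K : Multigraph V} (hK : K.IsSubgraph H) {x y : V} {l : ℕ}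
    (hl : cdeg H K x y ≤ l) (Z : Finset V) (hZ : ∀ z ∈ Z, 1 ≤ K.mu x z) (hy : y ∈ Z) :
    ∑ z ∈ Z, ((K.deg z : ℤ) - (H.deg z : ℤ) + (K.mu x z : ℤ) - (l : ℤ)) ≤ 1 := by
  have hmem := Nat.sInf_mem ⟨_, maxDeg_mem_cdeg_set hK x y⟩ Z hZ hy
  refine le_trans (Finset.sum_le_sum fun z _ => ?_) hmem
  have : cdeg H K x y ≤ l := hl
  unfold cdeg at this
  omega

lemma exists_cdeg_le_corefan {H K : Multigraph V} (hK : K.IsSubgraph H) (hE : K.HasEdge) :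
    ∃ x y, 1 ≤ K.mu x y ∧ cdeg H K x y ≤ H.corefan := by
  obtain ⟨a, b, hab⟩ := hE
  obtain ⟨x, y, hxy, hmin⟩ := Nat.sInf_mem (s := { m | ∃ x y, 1 ≤ K.mu x y ∧ m = cdeg H K x y })
    ⟨_, a, b, hab, rfl⟩
  have hbdd : BddAbove { n | ∃ K' : Multigraph V, K'.IsSubgraph H ∧ K'.HasEdge ∧
      n = sInf { m | ∃ x y, 1 ≤ K'.mu x y ∧ m = cdeg H K' x y } } := by
    refine ⟨H.maxDeg, ?_⟩
    rintro n ⟨K', hK', ⟨a', b', hab'⟩, rfl⟩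
    exact le_trans (Nat.sInf_le ⟨a', b', hab', rfl⟩) (cdeg_le_maxDeg hK' a' b')
  exact ⟨x, y, hxy, hmin ▸ le_csSup hbdd ⟨K, hK, ⟨a, b, hab⟩, rfl⟩⟩

lemma fanDeg_le_of_sum_le {J : Multigraph V} {x y : V} {k : ℕ}
    (h : ∀ Z : Finset V, (∀ z ∈ Z, 1 ≤ J.mu x z) → y ∈ Z →
      ∑ z ∈ Z, ((J.deg z : ℤ) + (J.mu x z : ℤ) - (k : ℤ)) ≤ 1) :
    J.fanDeg x y ≤ k :=
  Nat.sInf_le (Or.inr fun Z hZ hy _ => h Z hZ hy)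

lemma fanNum_le {G : Multigraph V} {k : ℕ}
    (h : ∀ J : Multigraph V, J.IsSubgraph G → J.HasEdge →
      ∃ x y, 1 ≤ J.mu x y ∧ J.fanDeg x y ≤ k) :
    G.fanNum ≤ k := by
  refine csSup_le' fun n ⟨J, hJG, hJ, hn⟩ => ?_
  subst hn
  obtain ⟨x, y, hxy, hk⟩ := h J hJG hJ
  exact le_trans (Nat.sInf_le ⟨x, y, hxy, rfl⟩) hk

lemma fanDeg_le_of_forall_adj {J G : Multigraph V} (hJG : J.IsSubgraph G) {x : V} (y : V)
    {k : ℕ} (hx : ∀ z, 1 ≤ J.mu x z → G.deg z + G.locMult z ≤ k) :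
    J.fanDeg x y ≤ k := by
  refine fanDeg_le_of_sum_le fun Z hZ _ =>
    (Finset.sum_nonpos fun z hz => ?_).trans zero_le_one
  have := (hJG.deg_add_mu_le x z).trans (hx z (hZ z hz))
  omega

section core

variable {p : V → Prop} [DecidablePred p] {J G : Multigraph V} {t : ℕ}

lemma fan_sum_le_fan_sum_filter {k : ℕ} (hJG : J.IsSubgraph G)
    (hp : ∀ z, ¬ p z → G.deg z + G.locMult z ≤ k) (x : V) (Z : Finset V) :
    ∑ z ∈ Z, ((J.deg z : ℤ) + (J.mu x z : ℤ) - (k : ℤ)) ≤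
      ∑ z ∈ Z with p z, ((J.deg z : ℤ) + (J.mu x z : ℤ) - (k : ℤ)) := by
  rw [← Finset.sum_filter_add_sum_filter_not Z p]
  refine add_le_of_nonpos_right (Finset.sum_nonpos fun z hz => ?_)
  have := (hJG.deg_add_mu_le x z).trans (hp z (Finset.mem_filter.mp hz).2)
  omega

lemma fan_summand_le_cfan_summand {x z : V} (hJG : J.IsSubgraph G) (hx : p x) (hz : p z) :
    (J.deg z : ℤ) + (J.mu x z : ℤ) - ((G.maxDeg + t : ℕ) : ℤ) ≤
      ((J.induce p).deg z : ℤ) - ((G.induce p).deg z : ℤ) + ((J.induce p).mu x z : ℤ) - t := by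
  have hdeg := hJG.deg_add_deg_induce_le hz
  have hmax := G.deg_le_maxDeg z
  rw [induce_mu_of hx hz]
  push_cast
  omega

lemma fanDeg_le_of_cdeg_induce_le (hJG : J.IsSubgraph G)
    (hp : ∀ z, ¬ p z → G.deg z + G.locMult z ≤ G.maxDeg + t) {x y : V} (hx : p x) (hy : p y)
    (hcdeg : cdeg (G.induce p) (J.induce p) x y ≤ t) :
    J.fanDeg x y ≤ G.maxDeg + t := by
  refine fanDeg_le_of_sum_le fun Z hZ hyZ => (fan_sum_le_fan_sum_filter hJG hp x Z).trans ?_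
  refine (Finset.sum_le_sum fun z hz => fan_summand_le_cfan_summand hJG hx
    (Finset.mem_filter.mp hz).2).trans (sum_le_of_cdeg_le hJG.induce hcdeg _ ?_ ?_)
  · intro z hz
    rw [Finset.mem_filter] at hz
    rw [induce_mu_of hx hz.2]
    exact hZ z hz.1
  · exact Finset.mem_filter.mpr ⟨hyZ, hy⟩

lemma exists_edge_forall_adj_not (hJ : J.HasEdge) (hK : ¬ (J.induce p).HasEdge) :
    ∃ x y, 1 ≤ J.mu x y ∧ ∀ z, 1 ≤ J.mu x z → ¬ p z := by
  have hK' : ∀ u v, p u → p v → J.mu u v = 0 := fun u v hu hv => by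
    by_contra h0
    exact hK ⟨u, v, (induce_mu_of hu hv).symm ▸ Nat.one_le_iff_ne_zero.mpr h0⟩
  by_cases hc : ∃ c d, p c ∧ 1 ≤ J.mu c d
  · obtain ⟨c, d, hc, hcd⟩ := hc
    exact ⟨c, d, hcd, fun z hz hpz => by simp [hK' c z hc hpz] at hz⟩
  · obtain ⟨a, b, hab⟩ := hJ
    refine ⟨a, b, hab, fun z hz hpz => hc ⟨z, a, hpz, ?_⟩⟩
    rwa [J.symm]

end core

end Multigraph

open Multigraph in
/-- Theorem: if the t-core H of G satisfies corefan(H) ≤ t, then Fan(G) ≤ Δ(G) + t. -/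
theorem stmt2 {V : Type*} [Fintype V] (G : Multigraph V) (t : ℕ)
    (H : Multigraph V) (hH : H = G.tCore t)
    (h : H.corefan ≤ t) :
    G.bigFan ≤ G.maxDeg + t := by
  rw [hH, tCore_eq_induce] at h
  refine max_le (Nat.le_add_right _ _) (fanNum_le fun J hJG hJ => ?_)
  set p : V → Prop := fun v => G.maxDeg + t < G.deg v + G.locMult v
  have hp : ∀ z, ¬ p z → G.deg z + G.locMult z ≤ G.maxDeg + t := fun _ => not_lt.mp
  by_cases hK : (J.induce p).HasEdge
  · obtain ⟨x, y, hKxy, hcdeg⟩ := exists_cdeg_le_corefan hJG.induce hK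
    obtain ⟨hx, hy, hxy⟩ := of_one_le_induce_mu hKxy
    exact ⟨x, y, hxy, fanDeg_le_of_cdeg_induce_le hJG hp hx hy (hcdeg.trans h)⟩
  · obtain ⟨x, y, hxy, hx⟩ := exists_edge_forall_adj_not hJ hK
    exact ⟨x, y, hxy, fanDeg_le_of_forall_adj hJG y fun z hz => hp z (hx z hz)⟩
end

section
/- For each integer p ≥ 4, let H_p be the simple graph obtained from the complete graph K_p by designating a vertex v and attaching p−2 pendant vertices z_1, …, z_{p−2}, each adjacent only to v. Then H_p (taken as B) admits no full B-queue. -/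
/-- A full B-queue for a finite simple graph B: distinct vertices u_1, …, u_q and
sets S_0 = ∅, S_1, …, S_q = V(B) with S_i = N(u_i) ∪ {u_i} ∪ S_{i−1},
1 ≤ |S_i \ S_{i−1}| ≤ 2 and |S_i \ (S_{i−1} ∪ {u_i})| ≤ 1 for each i. -/
def HasFullBQueue {V : Type*} [Fintype V] (B : SimpleGraph V) : Prop :=
  ∃ (q : ℕ) (u : ℕ → V) (S : ℕ → Set V),
    (∀ i j, i < q → j < q → u i = u j → i = j) ∧
    S 0 = ∅ ∧
    (∀ i < q, S (i + 1) = B.neighborSet (u i) ∪ {u i} ∪ S i) ∧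
    (∀ i < q, 1 ≤ (S (i + 1) \ S i).ncard ∧ (S (i + 1) \ S i).ncard ≤ 2) ∧
    (∀ i < q, (S (i + 1) \ (S i ∪ {u i})).ncard ≤ 1) ∧
    S q = Set.univ

/-- For p ≥ 4, the graph H_p (K_p plus p−2 pendant vertices at a vertex v = inl 0)
admits no full B-queue. -/
theorem stmt15 (p : ℕ) (hp : 4 ≤ p)
    (B : SimpleGraph (Fin p ⊕ Fin (p - 2)))
    (hB : ∀ x y, B.Adj x y ↔
      ((∃ i j : Fin p, i ≠ j ∧ x = Sum.inl i ∧ y = Sum.inl j) ∨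
       (∃ k, x = Sum.inl ⟨0, by omega⟩ ∧ y = Sum.inr k) ∨
       (∃ k, x = Sum.inr k ∧ y = Sum.inl ⟨0, by omega⟩))) :
    ¬ HasFullBQueue B := by
  rintro ⟨q, u, S, -, hS0, hstep, hcard, -, hfull⟩
  classical
  set v : Fin p ⊕ Fin (p-2) := Sum.inl ⟨0, by omega⟩ with hv
  set T : Set (Fin p ⊕ Fin (p-2)) := insert v (Set.range Sum.inr) with hT
  have key : ∀ n, n ≤ q → (∀ m, m < n → ∀ j, u m ≠ Sum.inl j) → S n ⊆ T := by
    intro n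
    induction n with
    | zero => intro _ _; rw [hS0]; exact Set.empty_subset _
    | succ n ih =>
      intro hn hu
      have hn' : n < q := hn
      rw [hstep n hn']
      obtain ⟨k, hk⟩ : ∃ k, u n = Sum.inr k := by
        cases h : u n with
        | inl j => exact absurd h (hu n (Nat.lt_succ_self n) j)
        | inr k => exact ⟨k, rfl⟩
      intro x hx
      rcases hx with (hx | hx) | hx
      · rw [SimpleGraph.mem_neighborSet, hB] at hx
        rcases hx with ⟨i, j, _, h1, _⟩ | ⟨k', h1, _⟩ | ⟨k', _, h2⟩
        · rw [hk] at h1; exact absurd h1 (by simp)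
        · rw [hk] at h1; exact absurd h1 (by simp)
        · exact Set.mem_insert_iff.mpr (Or.inl h2)
      · rw [Set.mem_singleton_iff] at hx
        rw [hx, hk]; exact Set.mem_insert_iff.mpr (Or.inr ⟨k, rfl⟩)
      · exact ih (le_of_lt hn') (fun m hm => hu m (hm.trans (Nat.lt_succ_self n))) hx
  have hex : ∃ i, i < q ∧ ∃ j, u i = Sum.inl j := by
    by_contra h
    push_neg at h
    have hsub := key q le_rfl h
    have h1 : Sum.inl (⟨1, by omega⟩ : Fin p) ∈ S q := by rw [hfull]; exact Set.mem_univ _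
    have := hsub h1
    rcases this with h' | ⟨k, hk⟩
    · rw [hv] at h'; simp [Sum.inl.injEq, Fin.mk.injEq] at h'
    · exact absurd hk (by simp)
  set i₀ := Nat.find hex with hi₀
  obtain ⟨hi₀q, j, hj⟩ := Nat.find_spec hex
  have hmin : ∀ m, m < i₀ → ∀ j', u m ≠ Sum.inl j' := by
    intro m hm j' hj'
    exact Nat.find_min hex hm ⟨hm.trans hi₀q, j', hj'⟩
  have hsub : S i₀ ⊆ T := key i₀ hi₀q.le hmin
  -- the three clique vertices inl 1, inl 2, inl 3
  have hmem : ∀ m : Fin p, (m : ℕ) ≠ 0 → Sum.inl m ∈ S (i₀ + 1) \ S i₀ := by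
    intro m hm0
    constructor
    · rw [hstep i₀ hi₀q]
      by_cases hjm : j = m
      · left; right; rw [hj, hjm]; rfl
      · left; left
        rw [SimpleGraph.mem_neighborSet, hj, hB]
        exact Or.inl ⟨j, m, hjm, rfl, rfl⟩
    · intro hx
      rcases hsub hx with h' | ⟨k, hk⟩
      · rw [hv] at h'
        simp only [Sum.inl.injEq] at h'
        apply hm0; rw [h']
      · exact absurd hk (by simp)
  have h3sub : ({Sum.inl ⟨1, by omega⟩, Sum.inl ⟨2, by omega⟩, Sum.inl ⟨3, by omega⟩} :
      Set (Fin p ⊕ Fin (p-2))) ⊆ S (i₀ + 1) \ S i₀ := by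
    intro x hx
    rcases hx with hx | hx | hx
    · rw [hx]; exact hmem ⟨1, by omega⟩ (by simp)
    · rw [hx]; exact hmem ⟨2, by omega⟩ (by simp)
    · rw [hx]; exact hmem ⟨3, by omega⟩ (by simp)
  have h3card : ({Sum.inl ⟨1, by omega⟩, Sum.inl ⟨2, by omega⟩, Sum.inl ⟨3, by omega⟩} :
      Set (Fin p ⊕ Fin (p-2))).ncard = 3 := by
    rw [Set.ncard_insert_of_notMem (by simp [Fin.mk.injEq]),
        Set.ncard_insert_of_notMem (by simp [Fin.mk.injEq]), Set.ncard_singleton]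
  have hle := Set.ncard_le_ncard h3sub (Set.toFinite _)
  have hc2 := (hcard i₀ hi₀q).2
  omega
end
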